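/- Let Γ be a weighted directed graph on a finite vertex set V that is k-partite (k ≥ 2) and satisfies r(l) = r for all l ∈ V. Then 1 − r·e^{2πim/k} is an eigenvalue of the normalized Laplace operator Δ for every odd m with 1 ≤ m ≤ k − 1. If in addition w_{jt}/d_j^in > 0 whenever w_{jt} ≠ 0, then 1 − e^{2πim/k} is an eigenvalue of Δ for every m with 0 ≤ m ≤ k − 1. -/

import Mathlib

/-- In-degree of vertex `i`: `d_i^in = ∑_j w_{ij}`. -/
noncomputable def din {V : Type*} [Fintype V] (w : V → V → ℝ) (i : V) : ℝ :=
  ∑ j, w i j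

/-- The normalized Laplace operator of a weighted directed graph, as a complex matrix. -/
noncomputable def lap {V : Type*} [Fintype V] [DecidableEq V] (w : V → V → ℝ) :
    Matrix V V ℂ :=
  Matrix.of fun i j =>
    if din w i = 0 then 0
    else (if i = j then 1 else 0) - ((w i j / din w i : ℝ) : ℂ)

/-- Eigenvalues of the normalized Laplacian, with algebraic multiplicity. -/
noncomputable def specL {V : Type*} [Fintype V] [DecidableEq V] (w : V → V → ℝ) :
    Multiset ℂ :=
  (lap w).charpoly.roots

/-- `r(i) = (∑_j |w_{ij}|)/|d_i^in|` if `d_i^in ≠ 0`, and `r(i) = 0` otherwise. -/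
noncomputable def rfun {V : Type*} [Fintype V] (w : V → V → ℝ) (i : V) : ℝ :=
  if din w i = 0 then 0 else (∑ j, |w i j|) / |din w i|

/-- `r = max_{i ∈ V} r(i)`. -/
noncomputable def rmax {V : Type*} [Fintype V] [Nonempty V] (w : V → V → ℝ) : ℝ :=
  Finset.univ.sup' Finset.univ_nonempty (rfun w)

/-- The induced subgraph on `U` is `k`-partite (in-degrees computed in `Γ`): all in-degrees
are nonzero and `U` decomposes into `k` nonempty parts, indexed cyclically by `ZMod k`
via `f`, such that an edge from `j` to `i` with `w_{ij}/d_i^in > 0` goes from part `q - 1`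
to part `q`, while an edge with `w_{ij}/d_i^in < 0` (possible only for even `k`) goes from
part `q + l` to part `q`, where `l = k/2 - 1`. -/
def IsKPartite {V : Type*} [Fintype V] (w : V → V → ℝ) (U : Finset V) (k : ℕ) : Prop :=
  (∀ i ∈ U, din w i ≠ 0) ∧
  ∃ f : V → ZMod k,
    (∀ q : ZMod k, ∃ i ∈ U, f i = q) ∧
    ∀ i ∈ U, ∀ j ∈ U, w i j ≠ 0 →
      (0 < w i j / din w i → f i = f j + 1) ∧
      (w i j / din w i < 0 → Even k ∧ f j = f i + ((k / 2 - 1 : ℕ) : ZMod k))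

/-!
Let `f : V → ZMod k` be the part map and `ψ` an additive character of `ZMod k`. The function
`v = ψ ∘ (-f)` satisfies `v j = ψ 1 * v i` along every positive edge `j → i`, and, as soon as
`ψ (k/2) = -1`, `v j = -(ψ 1 * v i)` along every negative one. Hence the row of the transition
matrix `P = I - Δ` at `i` sends `v` to `r(i) ψ(1) v(i)`, so `1 - r ψ(1)` is an eigenvalue of `Δ`
when `r(i) = r` for all `i`. The character `x ↦ e^{2πimx/k}` has `ψ (k/2) = (-1)^m = -1` for
odd `m`; when all normalized weights are positive there are no negative edges and `r = 1`.
-/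

open Matrix

theorem Matrix.mem_charpoly_roots_of_mulVec_eq_smul {K n : Type*} [Field K] [Fintype n]
    [DecidableEq n] {A : Matrix n n K} {μ : K} {v : n → K} (hv : v ≠ 0)
    (h : A *ᵥ v = μ • v) : μ ∈ A.charpoly.roots := by
  rw [Polynomial.mem_roots A.charpoly_monic.ne_zero, Polynomial.IsRoot, eval_charpoly,
    ← exists_mulVec_eq_zero_iff]
  exact ⟨v, hv, by simp [sub_mulVec, h]⟩

lemma ZMod.stdAddChar_mul_half_of_odd {k m : ℕ} [NeZero k] (hk : Even k) (hm : Odd m) :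
    ZMod.stdAddChar ((m : ZMod k) * ((k / 2 : ℕ) : ZMod k)) = -1 := by
  have hhalf : ZMod.stdAddChar ((k / 2 : ℕ) : ZMod k) = -1 := by
    have h2 : 2 * ((k / 2 : ℕ) : ℂ) = k := by exact_mod_cast Nat.two_mul_div_two_of_even hk
    rw [← Int.cast_natCast, ZMod.stdAddChar_coe, Int.cast_natCast, ← Complex.exp_pi_mul_I]
    congr 1
    rw [div_eq_iff (Nat.cast_ne_zero.mpr (NeZero.ne k))]
    linear_combination (Real.pi : ℂ) * Complex.I * h2
  rw [← nsmul_eq_mul, AddChar.map_nsmul_eq_pow, hhalf, hm.neg_one_pow]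

section Laplacian

variable {V : Type*} [Fintype V] {w : V → V → ℝ}

lemma lap_mulVec_apply [DecidableEq V] (v : V → ℂ) {i : V} (hi : din w i ≠ 0) :
    (lap w *ᵥ v) i = v i - ∑ j, ((w i j / din w i : ℝ) : ℂ) * v j := by
  simp [lap, mulVec, dotProduct, hi, sub_mul, Finset.sum_sub_distrib]

lemma one_sub_mem_specL [DecidableEq V] (hd : ∀ i, din w i ≠ 0) {v : V → ℂ} (hv : v ≠ 0)
    {ρ : ℂ} (h : ∀ i, ∑ j, ((w i j / din w i : ℝ) : ℂ) * v j = ρ * v i) :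
    1 - ρ ∈ specL w :=
  Matrix.mem_charpoly_roots_of_mulVec_eq_smul hv <| funext fun i => by
    rw [lap_mulVec_apply v (hd i), h i, Pi.smul_apply, smul_eq_mul, sub_mul, one_mul]

lemma sum_div_din_mul_eq_rfun_mul {i : V} (hi : din w i ≠ 0) {v : V → ℂ} {c : ℂ}
    (hpos : ∀ j, 0 < w i j / din w i → v j = c * v i)
    (hneg : ∀ j, w i j / din w i < 0 → v j = -(c * v i)) :
    ∑ j, ((w i j / din w i : ℝ) : ℂ) * v j = rfun w i * c * v i := by
  have hterm : ∀ j, ((w i j / din w i : ℝ) : ℂ) * v j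
      = ((|w i j| / |din w i| : ℝ) : ℂ) * (c * v i) := by
    intro j
    rw [← abs_div]
    rcases lt_trichotomy (w i j / din w i) 0 with hlt | hzero | hgt
    · rw [hneg j hlt, abs_of_neg hlt]
      push_cast
      ring
    · simp [hzero]
    · rw [hpos j hgt, abs_of_pos hgt]
  rw [Finset.sum_congr rfl fun j _ => hterm j, ← Finset.sum_mul, rfun, if_neg hi]
  push_cast [Finset.sum_div]
  ring

lemma rfun_eq_one_of_forall_pos {i : V} (hi : din w i ≠ 0)
    (hpos : ∀ j, w i j ≠ 0 → 0 < w i j / din w i) : rfun w i = 1 := by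
  have hnonneg : ∀ j, 0 ≤ w i j / din w i := fun j => by
    by_cases hw : w i j = 0
    · simp [hw]
    · exact (hpos j hw).le
  rw [rfun, if_neg hi, Finset.sum_div]
  simp_rw [← abs_div, abs_of_nonneg (hnonneg _)]
  rw [← Finset.sum_div, ← din, div_self hi]

end Laplacian

namespace IsKPartite

variable {V : Type*} [Fintype V] {w : V → V → ℝ} {k : ℕ}

lemma even_of_div_din_neg (hkp : IsKPartite w Finset.univ k) {i j : V}
    (h : w i j / din w i < 0) : Even k := by
  obtain ⟨-, f, -, hedge⟩ := hkp
  exact ((hedge i (Finset.mem_univ i) j (Finset.mem_univ j) fun hw => by simp [hw] at h).2 h).1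

lemma one_sub_mul_mem_specL [DecidableEq V] (hkp : IsKPartite w Finset.univ k)
    (ψ : AddChar (ZMod k) ℂ)
    (hψ : ∀ i j, w i j / din w i < 0 → ψ ((k / 2 : ℕ) : ZMod k) = -1)
    {r : ℝ} (hr : ∀ i, rfun w i = r) : 1 - r * ψ 1 ∈ specL w := by
  obtain ⟨hd, f, hsurj, hedge⟩ := hkp
  have hψ0 : ∀ x, ψ x ≠ 0 := fun x =>
    left_ne_zero_of_mul_eq_one (by rw [← AddChar.map_add_eq_mul, add_neg_cancel,
      AddChar.map_zero_eq_one] : ψ x * ψ (-x) = 1)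
  have hv : (fun i => ψ (-f i)) ≠ 0 := fun h => by
    obtain ⟨i, -, -⟩ := hsurj 0
    exact hψ0 _ (congrFun h i)
  refine one_sub_mem_specL (fun i => hd i (Finset.mem_univ i)) hv fun i => ?_
  have hedge' : ∀ j, w i j / din w i ≠ 0 → _ := fun j hij =>
    hedge i (Finset.mem_univ i) j (Finset.mem_univ j) fun hw => by simp [hw] at hij
  rw [← hr i]
  refine sum_div_din_mul_eq_rfun_mul (hd i (Finset.mem_univ i)) (fun j hij => ?_) fun j hij => ?_
  · have hfj : -f j = 1 + -f i := by rw [(hedge' j hij.ne').1 hij]; ring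
    rw [hfj, AddChar.map_add_eq_mul]
  · have hhalf := hψ i j hij
    -- undoes the truncated subtraction in `k / 2 - 1`; `k / 2 = 0` would force `ψ 0 = -1`
    have hk2 : 1 ≤ k / 2 := Nat.one_le_iff_ne_zero.mpr fun h0 => by
      rw [h0, Nat.cast_zero, AddChar.map_zero_eq_one] at hhalf
      norm_num at hhalf
    have hfj : -f j = 1 + -f i + -((k / 2 : ℕ) : ZMod k) := by
      rw [(hedge' j hij.ne).2 hij |>.2, Nat.cast_sub hk2]
      push_cast
      ring
    rw [hfj, AddChar.map_add_eq_mul, AddChar.map_add_eq_mul,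
      AddChar.map_neg_eq_inv ψ ((k / 2 : ℕ) : ZMod k), hhalf]
    ring

end IsKPartite

theorem kpartite_eigenvalues_general {V : Type*} [Fintype V] [DecidableEq V] [Nonempty V]
    (w : V → V → ℝ) (k : ℕ) (hk : 2 ≤ k)
    (hkp : IsKPartite w Finset.univ k) (hr : ∀ l, rfun w l = rmax w) :
    (∀ m : ℕ, Odd m → 1 ≤ m → m ≤ k - 1 →
      1 - (rmax w : ℂ) *
        Complex.exp (2 * (Real.pi : ℂ) * Complex.I * (m : ℂ) / (k : ℂ)) ∈ specL w) ∧
    ((∀ j t, w j t ≠ 0 → 0 < w j t / din w j) →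
      ∀ m : ℕ, m ≤ k - 1 →
        1 - Complex.exp (2 * (Real.pi : ℂ) * Complex.I * (m : ℂ) / (k : ℂ)) ∈ specL w) := by
  have : NeZero k := ⟨by omega⟩
  have hψ1 : ∀ m : ℕ, ZMod.stdAddChar.mulShift (m : ZMod k) 1
      = Complex.exp (2 * (Real.pi : ℂ) * Complex.I * (m : ℂ) / (k : ℂ)) := fun m => by
    simpa using ZMod.stdAddChar_coe (N := k) m
  refine ⟨fun m hm _ _ => ?_, fun hpos m _ => ?_⟩
  · rw [← hψ1]
    exact hkp.one_sub_mul_mem_specL _ (fun i j hij =>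
      ZMod.stdAddChar_mul_half_of_odd (hkp.even_of_div_din_neg hij) hm) hr
  · have hr1 : ∀ i, rfun w i = 1 := fun i =>
      rfun_eq_one_of_forall_pos (hkp.1 i (Finset.mem_univ i)) (hpos i)
    simpa [hψ1] using hkp.one_sub_mul_mem_specL (ZMod.stdAddChar.mulShift (m : ZMod k))
      (fun i j hij => (lt_asymm hij (hpos i j fun hw => by simp [hw] at hij)).elim) hr1

/-- if `Γ` is `k`-partite and `r(l) = r` for all `l ∈ V`, then
`1 - r·e^{2πim/k}` is an eigenvalue of `Δ` for every odd `m` with `1 ≤ m ≤ k - 1`;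
if in addition all normalized weights are positive, then `1 - e^{2πim/k}` is an
eigenvalue of `Δ` for every `0 ≤ m ≤ k - 1`. -/
theorem kpartite_eigenvalues {V : Type*} [Fintype V] [DecidableEq V] [Nonempty V]
    (w : V → V → ℝ) (hloop : ∀ i, w i i = 0) (k : ℕ) (hk : 2 ≤ k)
    (hkp : IsKPartite w Finset.univ k) (hr : ∀ l, rfun w l = rmax w) :
    (∀ m : ℕ, Odd m → 1 ≤ m → m ≤ k - 1 →
      1 - (rmax w : ℂ) *
        Complex.exp (2 * (Real.pi : ℂ) * Complex.I * (m : ℂ) / (k : ℂ)) ∈ specL w) ∧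
    ((∀ j t, w j t ≠ 0 → 0 < w j t / din w j) →
      ∀ m : ℕ, m ≤ k - 1 →
        1 - Complex.exp (2 * (Real.pi : ℂ) * Complex.I * (m : ℂ) / (k : ℂ)) ∈ specL w) :=
  kpartite_eigenvalues_general w k hk hkp hr
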